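/- arXiv:1607.08498 — 4 statements merged into one kernel-verified Lean document; each statement's English description precedes it below -/
import Mathlib

section
/- Let (x*, λ*, μ*) satisfy the KKT conditions for min f(x) subject to l ≤ x ≤ u, and assume strict complementarity holds, i.e. λ*_i > 0 whenever x*_i = l_i and μ*_i > 0 whenever x*_i = u_i. Then there exists ρ > 0 such that for every x ∈ [l,u] with ‖x − x*‖ < ρ one has A_l(x) = {i : x*_i = l_i} and A_u(x) = {i : x*_i = u_i}. -/
/-!
Under strict complementarity the KKT conditions force `g_i(x*) > 0` at indices active at `l`,
`g_i(x*) < 0` at indices active at `u` and `g_i(x*) = 0` elsewhere. Since `λ_i(x*) = g_i(x*)` when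
`x*_i = l_i`, `μ_i(x*) = -g_i(x*)` when `x*_i = u_i`, and both vanish when `g_i(x*) = 0`, every
defining inequality of `A_l` and `A_u` holds or fails strictly at `x*`. The weights of `λ` and `μ`
are continuous because `l_i < u_i` keeps their denominator positive, so all these strict
inequalities persist near `x*`.
-/

open Finset

/-- The gradient of `f` at `x`: its `i`-th component is the partial derivative of `f`
in the `i`-th coordinate direction (the Euclidean gradient). -/
noncomputable def grad {n : ℕ} (f : (Fin n → ℝ) → ℝ) (x : Fin n → ℝ) (i : Fin n) : ℝ :=
  fderiv ℝ f x (Pi.single i 1)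

/-- The multiplier function `λ_i(x)`. -/
noncomputable def lamMul {n : ℕ} (f : (Fin n → ℝ) → ℝ) (l u x : Fin n → ℝ) (i : Fin n) : ℝ :=
  (u i - x i) ^ 2 / ((l i - x i) ^ 2 + (u i - x i) ^ 2) * grad f x i

/-- The multiplier function `μ_i(x)`. -/
noncomputable def muMul {n : ℕ} (f : (Fin n → ℝ) → ℝ) (l u x : Fin n → ℝ) (i : Fin n) : ℝ :=
  -((l i - x i) ^ 2 / ((l i - x i) ^ 2 + (u i - x i) ^ 2) * grad f x i)

/-- The estimate `A_l(x)` of the variables active at the lower bound. -/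
def estAl {n : ℕ} (f : (Fin n → ℝ) → ℝ) (l u : Fin n → ℝ) (ε : ℝ) (x : Fin n → ℝ) :
    Set (Fin n) :=
  {i | l i ≤ x i ∧ x i ≤ l i + ε * lamMul f l u x i ∧ 0 < grad f x i}

/-- The estimate `A_u(x)` of the variables active at the upper bound. -/
def estAu {n : ℕ} (f : (Fin n → ℝ) → ℝ) (l u : Fin n → ℝ) (ε : ℝ) (x : Fin n → ℝ) :
    Set (Fin n) :=
  {i | u i - ε * muMul f l u x i ≤ x i ∧ x i ≤ u i ∧ grad f x i < 0}

/-- The estimate `N(x)` of the non-active variables. -/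
def estN {n : ℕ} (f : (Fin n → ℝ) → ℝ) (l u : Fin n → ℝ) (ε : ℝ) (x : Fin n → ℝ) :
    Set (Fin n) :=
  {i | i ∉ estAl f l u ε x ∧ i ∉ estAu f l u ε x}

/-- Componentwise projection onto the box `[l, u]`. -/
def projBox {n : ℕ} (l u y : Fin n → ℝ) : Fin n → ℝ :=
  fun i => min (u i) (max (l i) (y i))

/-- First-order optimality (stationarity) conditions at a feasible point. -/
def IsStationaryBox {n : ℕ} (f : (Fin n → ℝ) → ℝ) (l u x : Fin n → ℝ) : Prop :=
  ∀ i, (x i = l i → 0 ≤ grad f x i) ∧ (x i = u i → grad f x i ≤ 0) ∧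
    (l i < x i → x i < u i → grad f x i = 0)

open Filter Topology

/-- Strict complementarity expressed through the gradient alone. -/
def IsNondegenerateStationaryBox {n : ℕ} (f : (Fin n → ℝ) → ℝ) (l u x : Fin n → ℝ) : Prop :=
  ∀ i, (x i = l i → 0 < grad f x i) ∧ (x i = u i → grad f x i < 0) ∧
    (l i < x i → x i < u i → grad f x i = 0)

theorem sq_sub_add_sq_sub_pos {a b : ℝ} (hab : a ≠ b) (t : ℝ) :
    0 < (a - t) ^ 2 + (b - t) ^ 2 := by
  rcases eq_or_ne t a with rfl | h
  · have : b - t ≠ 0 := sub_ne_zero.mpr hab.symm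
    positivity
  · have : a - t ≠ 0 := sub_ne_zero.mpr h.symm
    positivity

theorem dist_le_sqrt_sum_sq_sub {n : ℕ} (x y : Fin n → ℝ) :
    dist x y ≤ √(∑ i, (x i - y i) ^ 2) := by
  refine (dist_pi_le_iff (Real.sqrt_nonneg _)).2 fun i => ?_
  rw [Real.dist_eq, ← Real.sqrt_sq_eq_abs]
  exact Real.sqrt_le_sqrt (single_le_sum (fun j _ => sq_nonneg (x j - y j)) (mem_univ i))

section
variable {n : ℕ} {f : (Fin n → ℝ) → ℝ} {l u x xs : Fin n → ℝ} {ε : ℝ} {i : Fin n}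

theorem continuous_grad (hf : ContDiff ℝ 1 f) (i : Fin n) : Continuous fun x => grad f x i :=
  (hf.continuous_fderiv one_ne_zero).clm_apply continuous_const

theorem continuous_lamMul (hf : ContDiff ℝ 1 f) (hlu : l i ≠ u i) :
    Continuous fun x => lamMul f l u x i := by
  have := continuous_grad hf i
  unfold lamMul
  fun_prop (disch := exact fun x => (sq_sub_add_sq_sub_pos hlu (x i)).ne')

theorem continuous_muMul (hf : ContDiff ℝ 1 f) (hlu : l i ≠ u i) :
    Continuous fun x => muMul f l u x i := by
  have := continuous_grad hf i
  unfold muMul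
  fun_prop (disch := exact fun x => (sq_sub_add_sq_sub_pos hlu (x i)).ne')

theorem lamMul_of_eq_lower (hlu : l i ≠ u i) (hx : x i = l i) :
    lamMul f l u x i = grad f x i := by
  have : u i - l i ≠ 0 := sub_ne_zero.mpr hlu.symm
  simp [lamMul, hx, this]

theorem muMul_of_eq_upper (hlu : l i ≠ u i) (hx : x i = u i) :
    muMul f l u x i = -grad f x i := by
  have : l i - u i ≠ 0 := sub_ne_zero.mpr hlu
  simp [muMul, hx, this]

theorem not_mem_estAl_of_grad_nonpos (hg : grad f x i ≤ 0) : i ∉ estAl f l u ε x :=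
  fun hi => hg.not_gt hi.2.2

theorem not_mem_estAu_of_grad_nonneg (hg : 0 ≤ grad f x i) : i ∉ estAu f l u ε x :=
  fun hi => hg.not_gt hi.2.2

theorem eventually_mem_estAl (hf : ContDiff ℝ 1 f) (hlu : l i ≠ u i) (hε : 0 < ε)
    (hxs : xs i = l i) (hg : 0 < grad f xs i) :
    ∀ᶠ x in 𝓝 xs, l i ≤ x i → i ∈ estAl f l u ε x := by
  have hbound : ∀ᶠ x in 𝓝 xs, x i < l i + ε * lamMul f l u x i := by
    have := continuous_lamMul hf hlu
    refine (continuous_apply i).continuousAt.eventually_lt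
      (g := fun x => l i + ε * lamMul f l u x i) (by fun_prop) ?_
    simp only [hxs, lamMul_of_eq_lower hlu hxs]
    nlinarith
  have hsign := (continuous_grad hf i).continuousAt.eventually_const_lt hg
  filter_upwards [hbound, hsign] with x hx hgx hl using ⟨hl, hx.le, hgx⟩

theorem eventually_mem_estAu (hf : ContDiff ℝ 1 f) (hlu : l i ≠ u i) (hε : 0 < ε)
    (hxs : xs i = u i) (hg : grad f xs i < 0) :
    ∀ᶠ x in 𝓝 xs, x i ≤ u i → i ∈ estAu f l u ε x := by
  have hbound : ∀ᶠ x in 𝓝 xs, u i - ε * muMul f l u x i < x i := by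
    have := continuous_muMul hf hlu
    refine ContinuousAt.eventually_lt (f := fun x => u i - ε * muMul f l u x i) (by fun_prop)
      (continuous_apply i).continuousAt ?_
    simp only [hxs, muMul_of_eq_upper hlu hxs]
    nlinarith
  have hsign := (continuous_grad hf i).continuousAt.eventually_lt_const hg
  filter_upwards [hbound, hsign] with x hx hgx hu using ⟨hx.le, hu, hgx⟩

theorem eventually_not_mem_estAl (hf : ContDiff ℝ 1 f) (hlu : l i ≠ u i)
    (hxs : l i < xs i) (hg : grad f xs i = 0) :
    ∀ᶠ x in 𝓝 xs, i ∉ estAl f l u ε x := by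
  have hbound : ∀ᶠ x in 𝓝 xs, l i + ε * lamMul f l u x i < x i := by
    have := continuous_lamMul hf hlu
    refine ContinuousAt.eventually_lt (f := fun x => l i + ε * lamMul f l u x i) (by fun_prop)
      (continuous_apply i).continuousAt ?_
    simpa [lamMul, hg] using hxs
  filter_upwards [hbound] with x hx hi using hx.not_ge hi.2.1

theorem eventually_not_mem_estAu (hf : ContDiff ℝ 1 f) (hlu : l i ≠ u i)
    (hxs : xs i < u i) (hg : grad f xs i = 0) :
    ∀ᶠ x in 𝓝 xs, i ∉ estAu f l u ε x := by
  have hbound : ∀ᶠ x in 𝓝 xs, x i < u i - ε * muMul f l u x i := by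
    have := continuous_muMul hf hlu
    refine (continuous_apply i).continuousAt.eventually_lt
      (g := fun x => u i - ε * muMul f l u x i) (by fun_prop) ?_
    simpa [muMul, hg] using hxs
  filter_upwards [hbound] with x hx hi using hx.not_ge hi.1

end

theorem isNondegenerateStationaryBox_of_kkt {n : ℕ} {f : (Fin n → ℝ) → ℝ} {l u xs lam mu : Fin n → ℝ}
    (hlu : ∀ i, l i < u i)
    (hkkt1 : ∀ i, grad f xs i - lam i + mu i = 0)
    (hkkt2 : ∀ i, (l i - xs i) * lam i = 0)
    (hkkt3 : ∀ i, (xs i - u i) * mu i = 0)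
    (hsc : ∀ i, (xs i = l i → 0 < lam i) ∧ (xs i = u i → 0 < mu i)) :
    IsNondegenerateStationaryBox f l u xs := by
  intro i
  have hlam : xs i ≠ l i → lam i = 0 := fun h =>
    (mul_eq_zero.mp (hkkt2 i)).resolve_left (sub_ne_zero.mpr h.symm)
  have hmu : xs i ≠ u i → mu i = 0 := fun h =>
    (mul_eq_zero.mp (hkkt3 i)).resolve_left (sub_ne_zero.mpr h)
  refine ⟨fun hl => ?_, fun hu => ?_, fun hl hu => ?_⟩
  · linarith [hkkt1 i, hmu (hl ▸ (hlu i).ne), (hsc i).1 hl]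
  · linarith [hkkt1 i, hlam (hu ▸ (hlu i).ne'), (hsc i).2 hu]
  · linarith [hkkt1 i, hlam hl.ne', hmu hu.ne]

section
variable {n : ℕ} {f : (Fin n → ℝ) → ℝ} {l u xs : Fin n → ℝ} {ε : ℝ}

theorem eventually_mem_estAl_iff_and_mem_estAu_iff {i : Fin n} (hf : ContDiff ℝ 1 f)
    (hlu : l i < u i) (hε : 0 < ε) (hxs : l i ≤ xs i ∧ xs i ≤ u i)
    (hnd : IsNondegenerateStationaryBox f l u xs) :
    ∀ᶠ x in 𝓝 xs, l i ≤ x i → x i ≤ u i →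
      (i ∈ estAl f l u ε x ↔ xs i = l i) ∧ (i ∈ estAu f l u ε x ↔ xs i = u i) := by
  obtain ⟨hlower, hupper, hinner⟩ := hnd i
  rcases hxs.1.eq_or_lt with hl | hl
  · have hg := hlower hl.symm
    filter_upwards [eventually_mem_estAl hf hlu.ne hε hl.symm hg,
      (continuous_grad hf i).continuousAt.eventually_const_lt hg] with x hAl hgx hlx _
    exact ⟨iff_of_true (hAl hlx) hl.symm,
      iff_of_false (not_mem_estAu_of_grad_nonneg hgx.le) (hl ▸ hlu.ne)⟩
  rcases hxs.2.eq_or_lt with hu | hu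
  · have hg := hupper hu
    filter_upwards [eventually_mem_estAu hf hlu.ne hε hu hg,
      (continuous_grad hf i).continuousAt.eventually_lt_const hg] with x hAu hgx _ hux
    exact ⟨iff_of_false (not_mem_estAl_of_grad_nonpos hgx.le) (hu ▸ hlu.ne'),
      iff_of_true (hAu hux) hu⟩
  · have hg := hinner hl hu
    filter_upwards [eventually_not_mem_estAl hf hlu.ne hl hg,
      eventually_not_mem_estAu hf hlu.ne hu hg] with x hAl hAu _ _
    exact ⟨iff_of_false hAl hl.ne', iff_of_false hAu hu.ne⟩

theorem eventually_estAl_eq_and_estAu_eq (hf : ContDiff ℝ 1 f) (hlu : ∀ i, l i < u i)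
    (hε : 0 < ε) (hfeas : ∀ i, l i ≤ xs i ∧ xs i ≤ u i)
    (hnd : IsNondegenerateStationaryBox f l u xs) :
    ∀ᶠ x in 𝓝 xs, (∀ i, l i ≤ x i ∧ x i ≤ u i) →
      estAl f l u ε x = {i | xs i = l i} ∧ estAu f l u ε x = {i | xs i = u i} := by
  filter_upwards [eventually_all.2 fun i =>
    eventually_mem_estAl_iff_and_mem_estAu_iff hf (hlu i) hε (hfeas i) hnd] with x hx hbox
  exact ⟨Set.ext fun i => (hx i (hbox i).1 (hbox i).2).1,
    Set.ext fun i => (hx i (hbox i).1 (hbox i).2).2⟩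

end

theorem active_set_exact_identification_general {n : ℕ} (f : (Fin n → ℝ) → ℝ) (hf : ContDiff ℝ 2 f)
    (l u : Fin n → ℝ) (hlu : ∀ i, l i < u i) (ε : ℝ) (hε : 0 < ε)
    (xs lam mu : Fin n → ℝ)
    (hfeas : ∀ i, l i ≤ xs i ∧ xs i ≤ u i)
    (hkkt1 : ∀ i, grad f xs i - lam i + mu i = 0)
    (hkkt2 : ∀ i, (l i - xs i) * lam i = 0)
    (hkkt3 : ∀ i, (xs i - u i) * mu i = 0)
    (hsc : ∀ i, (xs i = l i → 0 < lam i) ∧ (xs i = u i → 0 < mu i)) :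
    ∃ ρ > (0 : ℝ), ∀ x : Fin n → ℝ, (∀ i, l i ≤ x i ∧ x i ≤ u i) →
      Real.sqrt (∑ i, (x i - xs i) ^ 2) < ρ →
      estAl f l u ε x = {i | xs i = l i} ∧
      estAu f l u ε x = {i | xs i = u i} := by
  have hnd := isNondegenerateStationaryBox_of_kkt hlu hkkt1 hkkt2 hkkt3 hsc
  obtain ⟨ρ, hρ, hball⟩ := Metric.eventually_nhds_iff.1 <|
    eventually_estAl_eq_and_estAu_eq (hf.of_le one_le_two) hlu hε hfeas hnd
  exact ⟨ρ, hρ, fun x hbox hx => hball ((dist_le_sqrt_sum_sq_sub x xs).trans_lt hx) hbox⟩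

/-- under strict complementarity, near a KKT point the active-set estimates
identify exactly the active constraints. -/
theorem active_set_exact_identification {n : ℕ} (f : (Fin n → ℝ) → ℝ) (hf : ContDiff ℝ 2 f)
    (l u : Fin n → ℝ) (hlu : ∀ i, l i < u i) (ε : ℝ) (hε : 0 < ε)
    (xs lam mu : Fin n → ℝ)
    (hfeas : ∀ i, l i ≤ xs i ∧ xs i ≤ u i)
    (hkkt1 : ∀ i, grad f xs i - lam i + mu i = 0)
    (hkkt2 : ∀ i, (l i - xs i) * lam i = 0)
    (hkkt3 : ∀ i, (xs i - u i) * mu i = 0)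
    (hkkt4 : ∀ i, 0 ≤ lam i ∧ 0 ≤ mu i)
    (hsc : ∀ i, (xs i = l i → 0 < lam i) ∧ (xs i = u i → 0 < mu i)) :
    ∃ ρ > (0 : ℝ), ∀ x : Fin n → ℝ, (∀ i, l i ≤ x i ∧ x i ≤ u i) →
      Real.sqrt (∑ i, (x i - xs i) ^ 2) < ρ →
      estAl f l u ε x = {i | xs i = l i} ∧
      estAu f l u ε x = {i | xs i = u i} :=
  active_set_exact_identification_general f hf l u hlu ε hε xs lam mu hfeas hkkt1 hkkt2 hkkt3 hsc
end

section
/- Assume the parameter ε > 0 satisfies ε·vᵀH(z)v ≤ ‖v‖² for every z ∈ [l,u] and every v ∈ ℝⁿ (i.e. ε ≤ 1/λ̄ where λ̄ = max_{z∈[l,u]} λ_max(H(z)) when λ̄ > 0, and ε > 0 arbitrary otherwise). Let x ∈ [l,u] with A_l(x) ∪ A_u(x) ≠ ∅, and define x̃ by x̃_i := l_i for i ∈ A_l(x), x̃_i := u_i for i ∈ A_u(x), and x̃_i := x_i for i ∈ N(x). Then f(x̃) − f(x) ≤ −(1/(2ε))·‖x − x̃‖². -/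
open Finset

/-!
Write `d = x̃ - x`. A coordinate moved to its lower bound has `0 ≤ x_i - l_i ≤ ε λ_i ≤ ε g_i`,
because the weight in `λ_i` is at most one (symmetrically at the upper bound), so
`ε g_i d_i ≤ -d_i²` and hence `ε ∇f(x)ᵀd ≤ -‖d‖²`. The box is convex, so the curvature bound
`ε dᵀH d ≤ ‖d‖²` holds along the segment `[x, x̃]`, and the second-order Taylor upper bound gives
`f(x̃) ≤ f(x) + ∇f(x)ᵀd + ‖d‖²/(2ε) ≤ f(x) - ‖d‖²/(2ε)`.
-/

open Set

theorem le_add_deriv_mul_add_of_deriv_deriv_le {φ φ' φ'' : ℝ → ℝ} {a b M : ℝ} (hab : a ≤ b)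
    (hφ : ∀ t ∈ Icc a b, HasDerivAt φ (φ' t) t)
    (hφ' : ∀ t ∈ Icc a b, HasDerivAt φ' (φ'' t) t)
    (hM : ∀ t ∈ Icc a b, φ'' t ≤ M) :
    φ b ≤ φ a + φ' a * (b - a) + M / 2 * (b - a) ^ 2 := by
  have hφ'_le : ∀ t ∈ Icc a b, φ' t ≤ φ' a + M * (t - a) := by
    refine image_le_of_deriv_right_le_deriv_boundary
      (fun t ht => (hφ' t ht).continuousAt.continuousWithinAt)
      (fun t ht => (hφ' t (Ico_subset_Icc_self ht)).hasDerivWithinAt) (by simp)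
      (by fun_prop) (fun t _ => ?_) (fun t ht => hM t (Ico_subset_Icc_self ht))
    simpa using ((((hasDerivAt_id t).sub_const a).const_mul M).const_add (φ' a)).hasDerivWithinAt
  have hB : ∀ t, HasDerivAt (fun s => φ a + φ' a * (s - a) + M / 2 * (s - a) ^ 2)
      (φ' a + M * (t - a)) t := by
    intro t
    have h := (((hasDerivAt_id' t).sub_const a).const_mul (φ' a)).const_add (φ a) |>.fun_add
      ((((hasDerivAt_id' t).sub_const a).pow 2).const_mul (M / 2))
    exact h.congr_deriv (by simp; ring)
  exact image_le_of_deriv_right_le_deriv_boundary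
    (fun t ht => (hφ t ht).continuousAt.continuousWithinAt)
    (fun t ht => (hφ t (Ico_subset_Icc_self ht)).hasDerivWithinAt) (by simp)
    (fun t _ => (hB t).continuousAt.continuousWithinAt) (fun t _ => (hB t).hasDerivWithinAt)
    (fun t ht => hφ'_le t (Ico_subset_Icc_self ht)) (right_mem_Icc.2 hab)

theorem ContDiff.le_add_fderiv_add_of_iteratedFDeriv_le {E : Type*} [NormedAddCommGroup E]
    [NormedSpace ℝ E] {f : E → ℝ} (hf : ContDiff ℝ 2 f) (x d : E) {M : ℝ}
    (hM : ∀ t ∈ Icc (0 : ℝ) 1, iteratedFDeriv ℝ 2 f (x + t • d) ![d, d] ≤ M) :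
    f (x + d) ≤ f x + fderiv ℝ f x d + M / 2 := by
  have hf₁ : Differentiable ℝ f := hf.differentiable (by norm_num)
  have hf₂ : Differentiable ℝ (fderiv ℝ f) :=
    (hf.fderiv_right (m := 1) (by norm_num)).differentiable one_ne_zero
  have hline : ∀ t : ℝ, HasDerivAt (fun s : ℝ => x + s • d) d t := fun t => by
    simpa using ((hasDerivAt_id t).smul_const d).const_add x
  have key := le_add_deriv_mul_add_of_deriv_deriv_le zero_le_one
    (φ := fun t => f (x + t • d)) (φ' := fun t => fderiv ℝ f (x + t • d) d)
    (φ'' := fun t => fderiv ℝ (fderiv ℝ f) (x + t • d) d d)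
    (fun t _ => (hf₁ _).hasFDerivAt.comp_hasDerivAt t (hline t))
    (fun t _ => by
      simpa using ((hf₂ _).hasFDerivAt.comp_hasDerivAt t (hline t)).clm_apply
        (hasDerivAt_const t d))
    (fun t ht => by simpa [iteratedFDeriv_two_apply] using hM t ht)
  simpa using key

theorem fderiv_apply_eq_sum_grad {n : ℕ} (f : (Fin n → ℝ) → ℝ) (x d : Fin n → ℝ) :
    fderiv ℝ f x d = ∑ i, d i * grad f x i := by
  conv_lhs => rw [← univ_sum_single d]
  refine (map_sum _ _ _).trans (sum_congr rfl fun i _ => ?_)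
  rw [grad, ← smul_eq_mul, ← map_smul, ← Pi.single_smul', smul_eq_mul, mul_one]

section ActiveSets

variable {n : ℕ} {f : (Fin n → ℝ) → ℝ} {l u x : Fin n → ℝ} {ε : ℝ} {i : Fin n}

theorem lamMul_le_grad (hg : 0 ≤ grad f x i) : lamMul f l u x i ≤ grad f x i :=
  mul_le_of_le_one_left hg (div_le_one_of_le₀ (le_add_of_nonneg_left (sq_nonneg _))
    (by positivity))

theorem muMul_le_neg_grad (hg : grad f x i ≤ 0) : muMul f l u x i ≤ -grad f x i := by
  rw [muMul, neg_le_neg_iff, ← neg_le_neg_iff, ← mul_neg]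
  exact mul_le_of_le_one_left (neg_nonneg.2 hg) (div_le_one_of_le₀
    (le_add_of_nonneg_right (sq_nonneg _)) (by positivity))

theorem sub_le_mul_grad_of_mem_estAl (hε : 0 ≤ ε) (hi : i ∈ estAl f l u ε x) :
    x i - l i ≤ ε * grad f x i := by
  have := mul_le_mul_of_nonneg_left (lamMul_le_grad (f := f) (l := l) (u := u) hi.2.2.le) hε
  linarith [hi.2.1]

theorem sub_le_neg_mul_grad_of_mem_estAu (hε : 0 ≤ ε) (hi : i ∈ estAu f l u ε x) :
    u i - x i ≤ -(ε * grad f x i) := by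
  have := mul_le_mul_of_nonneg_left (muMul_le_neg_grad (f := f) (l := l) (u := u) hi.2.2.le) hε
  linarith [hi.1]

structure IsActiveSetUpdate (f : (Fin n → ℝ) → ℝ) (l u : Fin n → ℝ) (ε : ℝ) (x xt : Fin n → ℝ) :
    Prop where
  eq_lower : ∀ i ∈ estAl f l u ε x, xt i = l i
  eq_upper : ∀ i ∈ estAu f l u ε x, xt i = u i
  eq_self : ∀ i ∈ estN f l u ε x, xt i = x i

namespace IsActiveSetUpdate

variable {xt : Fin n → ℝ}

theorem mem_Icc (h : IsActiveSetUpdate f l u ε x xt) (hx : x ∈ Icc l u) : xt ∈ Icc l u := by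
  have hlu : l ≤ u := hx.1.trans hx.2
  refine ⟨fun i => ?_, fun i => ?_⟩ <;>
  · by_cases hl : i ∈ estAl f l u ε x
    · simp [h.eq_lower i hl, hlu i]
    by_cases hu : i ∈ estAu f l u ε x
    · simp [h.eq_upper i hu, hlu i]
    · simp [h.eq_self i ⟨hl, hu⟩, hx.1 i, hx.2 i]

theorem mul_sub_mul_grad_le_neg_sq (h : IsActiveSetUpdate f l u ε x xt) (hε : 0 ≤ ε)
    (i : Fin n) : ε * ((xt i - x i) * grad f x i) ≤ -(x i - xt i) ^ 2 := by
  by_cases hl : i ∈ estAl f l u ε x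
  · rw [h.eq_lower i hl]
    nlinarith [sub_le_mul_grad_of_mem_estAl hε hl, hl.1]
  by_cases hu : i ∈ estAu f l u ε x
  · rw [h.eq_upper i hu]
    nlinarith [sub_le_neg_mul_grad_of_mem_estAu hε hu, hu.2.1]
  · simp [h.eq_self i ⟨hl, hu⟩]

theorem mul_fderiv_le_neg_sum_sq (h : IsActiveSetUpdate f l u ε x xt) (hε : 0 ≤ ε) :
    ε * fderiv ℝ f x (xt - x) ≤ -∑ i, (x i - xt i) ^ 2 := by
  rw [fderiv_apply_eq_sum_grad, mul_sum, ← sum_neg_distrib]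
  exact sum_le_sum fun i _ => h.mul_sub_mul_grad_le_neg_sq hε i

end IsActiveSetUpdate

end ActiveSets

theorem active_set_descent_general {n : ℕ} (f : (Fin n → ℝ) → ℝ) (hf : ContDiff ℝ 2 f)
    (l u : Fin n → ℝ) (ε : ℝ) (hε : 0 < ε)
    (hH : ∀ z : Fin n → ℝ, (∀ i, l i ≤ z i ∧ z i ≤ u i) →
      ∀ v : Fin n → ℝ, ε * iteratedFDeriv ℝ 2 f z ![v, v] ≤ ∑ i, v i ^ 2)
    (x : Fin n → ℝ) (hx : ∀ i, l i ≤ x i ∧ x i ≤ u i)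
    (xt : Fin n → ℝ)
    (hxt1 : ∀ i ∈ estAl f l u ε x, xt i = l i)
    (hxt2 : ∀ i ∈ estAu f l u ε x, xt i = u i)
    (hxt3 : ∀ i ∈ estN f l u ε x, xt i = x i) :
    f xt - f x ≤ -(1 / (2 * ε)) * ∑ i, (x i - xt i) ^ 2 := by
  set Q := ∑ i, (x i - xt i) ^ 2
  have hupd : IsActiveSetUpdate f l u ε x xt := ⟨hxt1, hxt2, hxt3⟩
  have hx' : x ∈ Icc l u := ⟨fun i => (hx i).1, fun i => (hx i).2⟩
  have hcurv : ∀ t ∈ Icc (0 : ℝ) 1,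
      iteratedFDeriv ℝ 2 f (x + t • (xt - x)) ![xt - x, xt - x] ≤ Q / ε := by
    intro t ht
    have hz := (convex_Icc l u).add_smul_sub_mem hx' (hupd.mem_Icc hx') ht
    rw [le_div_iff₀' hε]
    simpa [Q, sub_sq_comm] using hH _ (fun i => ⟨hz.1 i, hz.2 i⟩) (xt - x)
  have htaylor := hf.le_add_fderiv_add_of_iteratedFDeriv_le x (xt - x) hcurv
  rw [add_sub_cancel] at htaylor
  have hslope : fderiv ℝ f x (xt - x) ≤ -Q / ε := by
    rw [le_div_iff₀ hε, mul_comm]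
    exact hupd.mul_fderiv_le_neg_sum_sq hε.le
  calc f xt - f x ≤ -Q / ε + Q / ε / 2 := by linarith
    _ = -(1 / (2 * ε)) * Q := by ring

/-- setting the estimated active variables to their bounds yields a
sufficient decrease of the objective function. -/
theorem active_set_descent {n : ℕ} (f : (Fin n → ℝ) → ℝ) (hf : ContDiff ℝ 2 f)
    (l u : Fin n → ℝ) (hlu : ∀ i, l i < u i) (ε : ℝ) (hε : 0 < ε)
    (hH : ∀ z : Fin n → ℝ, (∀ i, l i ≤ z i ∧ z i ≤ u i) →
      ∀ v : Fin n → ℝ, ε * iteratedFDeriv ℝ 2 f z ![v, v] ≤ ∑ i, v i ^ 2)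
    (x : Fin n → ℝ) (hx : ∀ i, l i ≤ x i ∧ x i ≤ u i)
    (hne : (estAl f l u ε x ∪ estAu f l u ε x).Nonempty)
    (xt : Fin n → ℝ)
    (hxt1 : ∀ i ∈ estAl f l u ε x, xt i = l i)
    (hxt2 : ∀ i ∈ estAu f l u ε x, xt i = u i)
    (hxt3 : ∀ i ∈ estN f l u ε x, xt i = x i) :
    f xt - f x ≤ -(1 / (2 * ε)) * ∑ i, (x i - xt i) ^ 2 :=
  active_set_descent_general f hf l u ε hε hH x hx xt hxt1 hxt2 hxt3
end

section
/- Let x̄ ∈ [l,u], σ₁ > 0, σ₂ > 0, and let d ∈ ℝⁿ satisfy d_i = 0 for all i ∈ A_l(x̄) ∪ A_u(x̄), Σ_{i∈N(x̄)} d_i·g_i(x̄) ≤ −σ₁·Σ_{i∈N(x̄)} g_i(x̄)², and Σ_{i∈N(x̄)} d_i² ≤ σ₂²·Σ_{i∈N(x̄)} g_i(x̄)². Then for every α > 0, ‖[x̄ + α d]♯ − x̄‖² ≤ −α²·(σ₂²/σ₁)·Σ_{i∈N(x̄)} g_i(x̄)·d_i. -/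
open Finset

open scoped Classical

/-!
Since `x` lies in the box, projecting `x + α d` onto it does not increase the distance to `x`,
so the left side is at most `α² ‖d‖²`, and `‖d‖²` only involves `N(x)` because `d` vanishes on
the estimated active sets. The two gradient-relatedness conditions then give
`‖d_N‖² ≤ σ₂² ‖g_N‖² ≤ -(σ₂² / σ₁) g_Nᵀ d_N`.
-/

lemma abs_projBox_sub_projBox_le {n : ℕ} (l u y z : Fin n → ℝ) (i : Fin n) :
    |projBox l u y i - projBox l u z i| ≤ |y i - z i| := by
  have hmin := abs_min_sub_min_le_max (u i) (max (l i) (y i)) (u i) (max (l i) (z i))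
  have hmax := abs_max_sub_max_le_abs (y i) (z i) (l i)
  rw [sub_self, abs_zero,
    max_eq_right (abs_nonneg (max (l i) (y i) - max (l i) (z i)))] at hmin
  rw [max_comm (y i), max_comm (z i)] at hmax
  exact hmin.trans hmax

lemma projBox_eq_self {n : ℕ} {l u x : Fin n → ℝ} (hx : ∀ i, l i ≤ x i ∧ x i ≤ u i) :
    projBox l u x = x :=
  funext fun i => by simp only [projBox, max_eq_right (hx i).1, min_eq_right (hx i).2]

lemma sum_sq_projBox_sub_le {n : ℕ} {l u x : Fin n → ℝ} (hx : ∀ i, l i ≤ x i ∧ x i ≤ u i)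
    (y : Fin n → ℝ) : ∑ i, (projBox l u y i - x i) ^ 2 ≤ ∑ i, (y i - x i) ^ 2 := by
  refine Finset.sum_le_sum fun i _ => sq_le_sq.mpr ?_
  simpa only [projBox_eq_self hx] using abs_projBox_sub_projBox_le l u y x i

lemma sum_sq_le_neg_div_mul_sum_mul {ι : Type*} (s : Finset ι) {d g : ι → ℝ} {σ1 σ2 : ℝ}
    (hσ1 : 0 < σ1) (h1 : ∑ i ∈ s, d i * g i ≤ -σ1 * ∑ i ∈ s, g i ^ 2)
    (h2 : ∑ i ∈ s, d i ^ 2 ≤ σ2 ^ 2 * ∑ i ∈ s, g i ^ 2) :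
    ∑ i ∈ s, d i ^ 2 ≤ -(σ2 ^ 2 / σ1) * ∑ i ∈ s, g i * d i := by
  have hgd : ∑ i ∈ s, g i * d i = ∑ i ∈ s, d i * g i :=
    Finset.sum_congr rfl fun i _ => mul_comm _ _
  have hS : ∑ i ∈ s, g i ^ 2 ≤ -(∑ i ∈ s, g i * d i) / σ1 := by
    rw [le_div_iff₀ hσ1, hgd]
    linarith
  calc ∑ i ∈ s, d i ^ 2 ≤ σ2 ^ 2 * ∑ i ∈ s, g i ^ 2 := h2
    _ ≤ σ2 ^ 2 * (-(∑ i ∈ s, g i * d i) / σ1) := mul_le_mul_of_nonneg_left hS (sq_nonneg σ2)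
    _ = -(σ2 ^ 2 / σ1) * ∑ i ∈ s, g i * d i := by ring

lemma mem_estN_of_ne_zero {n : ℕ} {f : (Fin n → ℝ) → ℝ} {l u : Fin n → ℝ} {ε : ℝ}
    {x d : Fin n → ℝ} (hd0 : ∀ i ∈ estAl f l u ε x ∪ estAu f l u ε x, d i = 0) {i : Fin n}
    (hi : d i ≠ 0) : i ∈ estN f l u ε x :=
  ⟨fun h => hi (hd0 i (Or.inl h)), fun h => hi (hd0 i (Or.inr h))⟩

theorem projected_step_norm_bound_general {n : ℕ} (f : (Fin n → ℝ) → ℝ)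
    (l u : Fin n → ℝ) (ε : ℝ)
    (x : Fin n → ℝ) (hx : ∀ i, l i ≤ x i ∧ x i ≤ u i)
    (σ1 σ2 : ℝ) (hσ1 : 0 < σ1)
    (d : Fin n → ℝ)
    (hd0 : ∀ i ∈ estAl f l u ε x ∪ estAu f l u ε x, d i = 0)
    (hd1 : ∑ i ∈ Finset.univ.filter (· ∈ estN f l u ε x), d i * grad f x i ≤
      -σ1 * ∑ i ∈ Finset.univ.filter (· ∈ estN f l u ε x), grad f x i ^ 2)
    (hd2 : ∑ i ∈ Finset.univ.filter (· ∈ estN f l u ε x), d i ^ 2 ≤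
      σ2 ^ 2 * ∑ i ∈ Finset.univ.filter (· ∈ estN f l u ε x), grad f x i ^ 2) :
    ∀ α : ℝ, 0 < α →
      ∑ i, (projBox l u (fun j => x j + α * d j) i - x i) ^ 2 ≤
        -(α ^ 2 * (σ2 ^ 2 / σ1)) *
          ∑ i ∈ Finset.univ.filter (· ∈ estN f l u ε x), grad f x i * d i := by
  intro α _
  have hsupp : ∑ i ∈ Finset.univ.filter (· ∈ estN f l u ε x), d i ^ 2 = ∑ i, d i ^ 2 :=
    Finset.sum_filter_of_ne fun i _ hi =>
      mem_estN_of_ne_zero hd0 (pow_ne_zero_iff two_ne_zero |>.mp hi)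
  calc ∑ i, (projBox l u (fun j => x j + α * d j) i - x i) ^ 2
      ≤ ∑ i, (x i + α * d i - x i) ^ 2 := sum_sq_projBox_sub_le hx _
    _ = α ^ 2 * ∑ i ∈ Finset.univ.filter (· ∈ estN f l u ε x), d i ^ 2 := by
      simp only [add_sub_cancel_left, mul_pow, hsupp, Finset.mul_sum]
    _ ≤ α ^ 2 * (-(σ2 ^ 2 / σ1) *
          ∑ i ∈ Finset.univ.filter (· ∈ estN f l u ε x), grad f x i * d i) :=
      mul_le_mul_of_nonneg_left (sum_sq_le_neg_div_mul_sum_mul _ hσ1 hd1 hd2) (sq_nonneg α)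
    _ = _ := by ring

/-- squared-norm bound for the projected step along a gradient-related
direction supported on the estimated non-active variables. -/
theorem projected_step_norm_bound {n : ℕ} (f : (Fin n → ℝ) → ℝ) (hf : ContDiff ℝ 2 f)
    (l u : Fin n → ℝ) (hlu : ∀ i, l i < u i) (ε : ℝ) (hε : 0 < ε)
    (x : Fin n → ℝ) (hx : ∀ i, l i ≤ x i ∧ x i ≤ u i)
    (σ1 σ2 : ℝ) (hσ1 : 0 < σ1) (hσ2 : 0 < σ2)
    (d : Fin n → ℝ)
    (hd0 : ∀ i ∈ estAl f l u ε x ∪ estAu f l u ε x, d i = 0)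
    (hd1 : ∑ i ∈ Finset.univ.filter (· ∈ estN f l u ε x), d i * grad f x i ≤
      -σ1 * ∑ i ∈ Finset.univ.filter (· ∈ estN f l u ε x), grad f x i ^ 2)
    (hd2 : ∑ i ∈ Finset.univ.filter (· ∈ estN f l u ε x), d i ^ 2 ≤
      σ2 ^ 2 * ∑ i ∈ Finset.univ.filter (· ∈ estN f l u ε x), grad f x i ^ 2) :
    ∀ α : ℝ, 0 < α →
      ∑ i, (projBox l u (fun j => x j + α * d j) i - x i) ^ 2 ≤
        -(α ^ 2 * (σ2 ^ 2 / σ1)) *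
          ∑ i ∈ Finset.univ.filter (· ∈ estN f l u ε x), grad f x i * d i :=
  projected_step_norm_bound_general f l u ε x hx σ1 σ2 hσ1 d hd0 hd1 hd2
end

section
/- Let x* ∈ [l,u] be a stationary point of min f(x) subject to l ≤ x ≤ u. Then the multiplier functions evaluated at x* give exact KKT multipliers: setting λ* := λ(x*) and μ* := μ(x*), one has g(x*) − λ* + μ* = 0, (l_i − x*_i)λ*_i = 0, (x*_i − u_i)μ*_i = 0, and λ*_i ≥ 0, μ*_i ≥ 0 for all i. -/
open Finset

/-- First-order optimality (stationarity) conditions at a feasible point. -/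
def IsBoxStationary {n : ℕ} (f : (Fin n → ℝ) → ℝ) (l u x : Fin n → ℝ) : Prop :=
  ∀ i, (x i = l i → 0 ≤ grad f x i) ∧ (x i = u i → grad f x i ≤ 0) ∧
    (l i < x i → x i < u i → grad f x i = 0)

/-- The weights of `λ_i` and `μ_i` add up to one. -/
theorem lamMul_sub_muMul {n : ℕ} (f : (Fin n → ℝ) → ℝ) {l u : Fin n → ℝ} (x : Fin n → ℝ)
    {i : Fin n} (hlu : l i ≠ u i) :
    lamMul f l u x i - muMul f l u x i = grad f x i := by
  have hd : (l i - x i) ^ 2 + (u i - x i) ^ 2 ≠ 0 := by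
    intro h
    obtain ⟨hl, hu⟩ := (add_eq_zero_iff_of_nonneg (sq_nonneg _) (sq_nonneg _)).1 h
    have hxl : l i - x i = 0 := pow_eq_zero_iff two_ne_zero |>.1 hl
    have hxu : u i - x i = 0 := pow_eq_zero_iff two_ne_zero |>.1 hu
    exact hlu (by linarith)
  simp only [lamMul, muMul]
  field_simp
  ring

theorem muMul_eq_zero_of_eq_lower {n : ℕ} (f : (Fin n → ℝ) → ℝ) {l u x : Fin n → ℝ} {i : Fin n}
    (h : x i = l i) : muMul f l u x i = 0 := by
  simp [muMul, h]

theorem lamMul_eq_zero_of_eq_upper {n : ℕ} (f : (Fin n → ℝ) → ℝ) {l u x : Fin n → ℝ} {i : Fin n}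
    (h : x i = u i) : lamMul f l u x i = 0 := by
  simp [lamMul, h]

theorem lamMul_eq_zero_of_grad_eq_zero {n : ℕ} {f : (Fin n → ℝ) → ℝ} {l u x : Fin n → ℝ}
    {i : Fin n} (hg : grad f x i = 0) : lamMul f l u x i = 0 := by
  simp [lamMul, hg]

theorem muMul_eq_zero_of_grad_eq_zero {n : ℕ} {f : (Fin n → ℝ) → ℝ} {l u x : Fin n → ℝ}
    {i : Fin n} (hg : grad f x i = 0) : muMul f l u x i = 0 := by
  simp [muMul, hg]

theorem multiplier_functions_exact_general {n : ℕ} (f : (Fin n → ℝ) → ℝ)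
    (l u : Fin n → ℝ) (hlu : ∀ i, l i < u i)
    (xs : Fin n → ℝ) (hfeas : ∀ i, l i ≤ xs i ∧ xs i ≤ u i)
    (hstat : IsBoxStationary f l u xs) :
    ∀ i, grad f xs i - lamMul f l u xs i + muMul f l u xs i = 0 ∧
      (l i - xs i) * lamMul f l u xs i = 0 ∧
      (xs i - u i) * muMul f l u xs i = 0 ∧
      0 ≤ lamMul f l u xs i ∧ 0 ≤ muMul f l u xs i := by
  intro i
  obtain ⟨hg_lower, hg_upper, hg_interior⟩ := hstat i
  have hdiff := lamMul_sub_muMul f xs (hlu i).ne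
  rcases (hfeas i).1.eq_or_lt with hl | hl
  · have hmu := muMul_eq_zero_of_eq_lower f hl.symm (u := u)
    have hg := hg_lower hl.symm
    refine ⟨by linarith, by rw [hl, sub_self, zero_mul], by rw [hmu, mul_zero], by linarith,
      hmu.ge⟩
  rcases (hfeas i).2.eq_or_lt with hu | hu
  · have hlam := lamMul_eq_zero_of_eq_upper f hu (l := l)
    have hg := hg_upper hu
    refine ⟨by linarith, by rw [hlam, mul_zero], by rw [hu, sub_self, zero_mul], hlam.ge,
      by linarith⟩
  · have hg := hg_interior hl hu
    simp [lamMul_eq_zero_of_grad_eq_zero hg, muMul_eq_zero_of_grad_eq_zero hg, hg]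

/-- at a stationary point, the multiplier functions give exact KKT
multipliers. -/
theorem multiplier_functions_exact {n : ℕ} (f : (Fin n → ℝ) → ℝ) (hf : ContDiff ℝ 2 f)
    (l u : Fin n → ℝ) (hlu : ∀ i, l i < u i)
    (xs : Fin n → ℝ) (hfeas : ∀ i, l i ≤ xs i ∧ xs i ≤ u i)
    (hstat : IsBoxStationary f l u xs) :
    ∀ i, grad f xs i - lamMul f l u xs i + muMul f l u xs i = 0 ∧
      (l i - xs i) * lamMul f l u xs i = 0 ∧
      (xs i - u i) * muMul f l u xs i = 0 ∧
      0 ≤ lamMul f l u xs i ∧ 0 ≤ muMul f l u xs i :=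
  multiplier_functions_exact_general f l u hlu xs hfeas hstat
end
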